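/- arXiv:1401.7227 — 3 statements merged into one kernel-verified Lean document; each statement's English description precedes it below -/
import Mathlib

section
/- For matrices D, G, L₁, U₁, L₂, U₂, L₃, U₃ with G, T, P invertible, where T = (G + L₁)(I + G⁻¹U₁), P = (T + L₂)(I + T⁻¹U₂), and B = (P + L₃)(I + P⁻¹U₃), and A = D + L₁ + U₁ + L₂ + U₂ + L₃ + U₃, the error matrix satisfies B - A = (G - D) + L₁G⁻¹U₁ + L₂T⁻¹U₂ + L₃P⁻¹U₃. -/
open Matrix

lemma fact_expand {n : ℕ} (X L U : Matrix (Fin n) (Fin n) ℝ) (hX : IsUnit X.det) :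
    (X + L) * (1 + X⁻¹ * U) = X + U + L + L * X⁻¹ * U := by
  have h := mul_nonsing_inv X hX
  rw [add_mul, mul_add, mul_add, mul_one, mul_one, ← mul_assoc, h, one_mul, mul_assoc]
  abel

theorem nested_factorisation_error
    {n : ℕ} (D G L₁ U₁ L₂ U₂ L₃ U₃ T P B A : Matrix (Fin n) (Fin n) ℝ)
    (hG : IsUnit G.det) (hTu : IsUnit T.det) (hPu : IsUnit P.det)
    (hT : T = (G + L₁) * (1 + G⁻¹ * U₁))
    (hP : P = (T + L₂) * (1 + T⁻¹ * U₂))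
    (hB : B = (P + L₃) * (1 + P⁻¹ * U₃))
    (hA : A = D + L₁ + U₁ + L₂ + U₂ + L₃ + U₃) :
    B - A = (G - D) + L₁ * G⁻¹ * U₁ + L₂ * T⁻¹ * U₂ + L₃ * P⁻¹ * U₃ := by
  rw [fact_expand G L₁ U₁ hG] at hT
  rw [fact_expand T L₂ U₂ hTu] at hP
  rw [fact_expand P L₃ U₃ hPu] at hB
  subst hA hB hP hT
  abel
end

section
/- With the nested factorisation setup (T = (G + L₁)(I + G⁻¹U₁), P = (T + L₂)(I + T⁻¹U₂), B = (P + L₃)(I + P⁻¹U₃), A = D + L₁ + U₁ + L₂ + U₂ + L₃ + U₃), if G is chosen so that G = D - L₁G⁻¹U₁, then the error matrix E = B - A equals L₂T⁻¹U₂ + L₃P⁻¹U₃; in particular E contains no contribution from the inner-band terms L₁, U₁, D, G. -/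
open Matrix

theorem nested_factorisation_inner_band_exact
    {n : ℕ} (D G L₁ U₁ L₂ U₂ L₃ U₃ T P B A : Matrix (Fin n) (Fin n) ℝ)
    (hG : IsUnit G.det) (hTu : IsUnit T.det) (hPu : IsUnit P.det)
    (hT : T = (G + L₁) * (1 + G⁻¹ * U₁))
    (hP : P = (T + L₂) * (1 + T⁻¹ * U₂))
    (hB : B = (P + L₃) * (1 + P⁻¹ * U₃))
    (hA : A = D + L₁ + U₁ + L₂ + U₂ + L₃ + U₃)
    (hGfix : G = D - L₁ * G⁻¹ * U₁) :
    B - A = L₂ * T⁻¹ * U₂ + L₃ * P⁻¹ * U₃ := by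
  have hGi : G * G⁻¹ = 1 := mul_nonsing_inv G hG
  have hTi : T * T⁻¹ = 1 := mul_nonsing_inv T hTu
  have hPi : P * P⁻¹ = 1 := mul_nonsing_inv P hPu
  have hT' : T = D + L₁ + U₁ := by
    have : G * (G⁻¹ * U₁) = U₁ := by rw [← mul_assoc, hGi, one_mul]
    rw [hT]
    rw [mul_add, add_mul, add_mul, mul_one, mul_one, this, ← mul_assoc]
    have hD : G + L₁ * G⁻¹ * U₁ = D := eq_sub_iff_add_eq.mp hGfix
    rw [← hD]; abel
  have hP' : P = T + L₂ + U₂ + L₂ * T⁻¹ * U₂ := by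
    have : T * (T⁻¹ * U₂) = U₂ := by rw [← mul_assoc, hTi, one_mul]
    rw [hP, mul_add, add_mul, add_mul, mul_one, mul_one, this, ← mul_assoc]
    abel
  have hB' : B = P + L₃ + U₃ + L₃ * P⁻¹ * U₃ := by
    have : P * (P⁻¹ * U₃) = U₃ := by rw [← mul_assoc, hPi, one_mul]
    rw [hB, mul_add, add_mul, add_mul, mul_one, mul_one, this, ← mul_assoc]
    abel
  rw [hB', hA]
  rw [hP']
  rw [hT']
  abel
end

section
/- For the nested factorisation choice G = D - L₁G⁻¹U₁ - colsum(L₂T⁻¹U₂) - colsum(L₃P⁻¹U₃), where colsum(M) denotes the diagonal matrix whose j-th diagonal entry is the j-th column sum of M, every column of the error matrix E = B - A sums to zero. -/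
open Matrix

/-- `colsum M` is the diagonal matrix whose j-th diagonal entry is the j-th column sum of M. -/
noncomputable def colsum {n : ℕ} (M : Matrix (Fin n) (Fin n) ℝ) : Matrix (Fin n) (Fin n) ℝ :=
  Matrix.diagonal (fun j => ∑ i, M i j)

theorem nested_factorisation_colsum_zero
    {n : ℕ} (D G L₁ U₁ L₂ U₂ L₃ U₃ T P B A : Matrix (Fin n) (Fin n) ℝ)
    (hG : IsUnit G.det) (hTu : IsUnit T.det) (hPu : IsUnit P.det)
    (hT : T = (G + L₁) * (1 + G⁻¹ * U₁))
    (hP : P = (T + L₂) * (1 + T⁻¹ * U₂))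
    (hB : B = (P + L₃) * (1 + P⁻¹ * U₃))
    (hA : A = D + L₁ + U₁ + L₂ + U₂ + L₃ + U₃)
    (hGfix : G = D - L₁ * G⁻¹ * U₁ - colsum (L₂ * T⁻¹ * U₂) - colsum (L₃ * P⁻¹ * U₃)) :
    ∀ j, ∑ i, (B - A) i j = 0 := by
  have hGi : G * G⁻¹ = 1 := mul_nonsing_inv G hG
  have hTi : T * T⁻¹ = 1 := mul_nonsing_inv T hTu
  have hPi : P * P⁻¹ = 1 := mul_nonsing_inv P hPu
  have hT' : T = G + L₁ + U₁ + L₁ * G⁻¹ * U₁ := by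
    rw [hT, mul_add, mul_one, add_mul, ← mul_assoc, hGi, one_mul, ← mul_assoc]; abel
  have hP' : P = T + L₂ + U₂ + L₂ * T⁻¹ * U₂ := by
    rw [hP, mul_add, mul_one, add_mul, ← mul_assoc, hTi, one_mul, ← mul_assoc]; abel
  have hB' : B = P + L₃ + U₃ + L₃ * P⁻¹ * U₃ := by
    rw [hB, mul_add, mul_one, add_mul, ← mul_assoc, hPi, one_mul, ← mul_assoc]; abel
  have hD : D = G + L₁ * G⁻¹ * U₁ + colsum (L₂ * T⁻¹ * U₂) + colsum (L₃ * P⁻¹ * U₃) := by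
    rw [sub_sub, sub_sub, eq_sub_iff_add_eq] at hGfix
    rw [← hGfix]; abel
  have hBA : B - A =
      (L₂ * T⁻¹ * U₂ - colsum (L₂ * T⁻¹ * U₂)) +
      (L₃ * P⁻¹ * U₃ - colsum (L₃ * P⁻¹ * U₃)) := by
    set iG := G⁻¹
    set iT := T⁻¹
    set iP := P⁻¹
    rw [hB', hP', hT', hA, hD]; abel
  intro j
  rw [hBA]
  have key : ∀ M : Matrix (Fin n) (Fin n) ℝ, ∑ i, (M - colsum M) i j = 0 := by
    intro M
    have h1 : ∑ i, colsum M i j = ∑ i, M i j := by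
      simp only [colsum, Matrix.diagonal_apply]
      rw [Finset.sum_ite_eq' Finset.univ j (fun j => ∑ i, M i j)]
      simp
    simp only [Matrix.sub_apply]
    rw [Finset.sum_sub_distrib, h1, sub_self]
  simp only [Matrix.add_apply, Finset.sum_add_distrib, key, add_zero]
end
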